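/- arXiv:1311.2758 — 3 statements merged into one kernel-verified Lean document; each statement's English description precedes it below -/
import Mathlib

section
/- Fix an integer d ≥ 1 and let R̂_d be the set of all d-element subsets of E = {±1, …, ±d} containing no pair {i, −i} (there are 2^d such subsets). For J ⊆ {0, 1, …, d}, let Γ_d(J) be the directed graph with vertex set R̂_d and an arrow from A to B whenever #(A ∩ B) ∈ J. If J contains two consecutive integers ℓ̃ and ℓ̃ + 1 for some 0 ≤ ℓ̃ ≤ d − 1, then Γ_d(J) is mixing: there exists m ≥ 1 such that every ordered pair of vertices is joined by a directed path of length exactly m. -/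
/-- The set `E = {±1, …, ±d}` of nonzero integers of absolute value at most `d`. -/
noncomputable def Eset (d : ℕ) : Finset ℤ := (Finset.Icc (-(d : ℤ)) d).filter (· ≠ 0)

/-- `A` belongs to `R̂_k`: a `k`-element subset of `E` containing no pair `{i, −i}`. -/
def RhatP (d k : ℕ) (A : Finset ℤ) : Prop :=
  A ⊆ Eset d ∧ A.card = k ∧ ∀ a ∈ A, -a ∉ A

/-- The directed graph on `R̂_k` with arrows given by `Arrow` is mixing: there is `m ≥ 1` such
that any ordered pair of vertices is joined by a directed path of length exactly `m`. -/
def GammaMixing (d k : ℕ) (Arrow : Finset ℤ → Finset ℤ → Prop) : Prop :=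
  ∃ m : ℕ, 1 ≤ m ∧ ∀ A B : Finset ℤ, RhatP d k A → RhatP d k B →
    ∃ f : ℕ → Finset ℤ, f 0 = A ∧ f m = B ∧
      (∀ i ≤ m, RhatP d k (f i)) ∧ ∀ i < m, Arrow (f i) (f (i + 1))

/-!
Negating the elements of a set `S ⊆ X` of a vertex `X ∈ R̂_d` gives a vertex `flipAt X S`, and
for `T ⊆ S ⊆ X` one has `#(flipAt X S ∩ flipAt X T) = d - #S + #T`. With `t = d - l`, choosing
`T ⊆ S` with `#S = t` shows that `X` reaches both `X` and any single negation of `X` in exactly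
two steps, through intersections of sizes `l` and `l + #T`. Since `B` is obtained from `A` by
negating the `#(A \ B) ≤ d` elements of `A \ B`, doing so one at a time, and marking time by
`X → Z → X` once `B` is reached, gives walks of length exactly `2d`.
-/

open Finset Pointwise

section Walks

variable {α : Type*} (P : α → Prop) (R : α → α → Prop)

/-- The shape of walk required by `GammaMixing`, for an arbitrary vertex predicate `P` and arrow
relation `R`. -/
def HasWalk (m : ℕ) (a b : α) : Prop :=
  ∃ f : ℕ → α, f 0 = a ∧ f m = b ∧ (∀ i ≤ m, P (f i)) ∧ ∀ i < m, R (f i) (f (i + 1))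

variable {P R}

theorem HasWalk.refl {a : α} (ha : P a) : HasWalk P R 0 a a :=
  ⟨fun _ => a, rfl, rfl, fun _ _ => ha, fun _ h => absurd h (Nat.not_lt_zero _)⟩

theorem HasWalk.cons {m : ℕ} {a b c : α} (ha : P a) (hab : R a b) (hbc : HasWalk P R m b c) :
    HasWalk P R (m + 1) a c := by
  obtain ⟨f, rfl, hfm, hP, hR⟩ := hbc
  refine ⟨fun | 0 => a | i + 1 => f i, rfl, hfm, ?_, ?_⟩
  · rintro (_ | i) hi
    exacts [ha, hP i (by omega)]
  · rintro (_ | i) hi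
    exacts [hab, hR i (by omega)]

end Walks

def flipAt (X S : Finset ℤ) : Finset ℤ := X \ S ∪ -S

theorem flipAt_empty (X : Finset ℤ) : flipAt X ∅ = X := by
  simp [flipAt]

theorem neg_mem_Eset {d : ℕ} {a : ℤ} (h : a ∈ Eset d) : -a ∈ Eset d := by
  simp only [Eset, mem_filter, mem_Icc] at h ⊢
  omega

theorem card_Eset (d : ℕ) : #(Eset d) = 2 * d := by
  rw [Eset, filter_ne', card_erase_of_mem (by simp), Int.card_Icc]
  omega

theorem RhatP.flipAt {d k : ℕ} {X S : Finset ℤ} (hX : RhatP d k X) (hS : S ⊆ X) :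
    RhatP d k (flipAt X S) := by
  obtain ⟨hXE, hXc, hXp⟩ := hX
  have hdisj : Disjoint (X \ S) (-S) := disjoint_left.2 fun a ha hna =>
    hXp a (mem_sdiff.1 ha).1 (hS (mem_neg'.1 hna))
  refine ⟨union_subset (sdiff_subset.trans hXE) fun a ha => ?_, ?_, fun a ha hna => ?_⟩
  · simpa using neg_mem_Eset (hXE (hS (mem_neg'.1 ha)))
  · rw [_root_.flipAt, card_union_of_disjoint hdisj, card_neg, card_sdiff_of_subset hS,
      Nat.sub_add_cancel (hXc ▸ card_le_card hS), hXc]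
  · simp only [_root_.flipAt, mem_union, mem_sdiff, mem_neg', neg_neg] at ha hna
    rcases ha with ⟨haX, haS⟩ | haS <;> rcases hna with ⟨hnaX, hnaS⟩ | hnaS
    exacts [hXp a haX hnaX, haS hnaS, hnaS haS, hXp _ (hS haS) (by simpa using hS hnaS)]

theorem flipAt_inter_flipAt {X S T : Finset ℤ} (hX : ∀ a ∈ X, -a ∉ X) (hTS : T ⊆ S)
    (hSX : S ⊆ X) : flipAt X S ∩ flipAt X T = X \ S ∪ -T := by
  ext x
  simp only [flipAt, mem_inter, mem_union, mem_sdiff, mem_neg']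
  constructor
  · rintro ⟨⟨hxX, hxS⟩ | hxS, ⟨hxX', _⟩ | hxT⟩
    exacts [.inl ⟨hxX, hxS⟩, .inl ⟨hxX, hxS⟩, absurd hxX' (by simpa using hX _ (hSX hxS)),
      .inr hxT]
  · rintro (⟨hxX, hxS⟩ | hxT)
    exacts [⟨.inl ⟨hxX, hxS⟩, .inl ⟨hxX, fun h => hxS (hTS h)⟩⟩, ⟨.inr (hTS hxT), .inr hxT⟩]

theorem card_flipAt_inter_flipAt {X S T : Finset ℤ} (hX : ∀ a ∈ X, -a ∉ X) (hTS : T ⊆ S)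
    (hSX : S ⊆ X) : #(flipAt X S ∩ flipAt X T) = #X - #S + #T := by
  have hdisj : Disjoint (X \ S) (-T) := disjoint_left.2 fun a ha hna =>
    hX a (mem_sdiff.1 ha).1 (hSX (hTS (mem_neg'.1 hna)))
  rw [flipAt_inter_flipAt hX hTS hSX, card_union_of_disjoint hdisj, card_neg,
    card_sdiff_of_subset hSX]

theorem RhatP.mem_or_neg_mem {d : ℕ} {X : Finset ℤ} (hX : RhatP d d X) {b : ℤ}
    (hb : b ∈ Eset d) : b ∈ X ∨ -b ∈ X := by
  obtain ⟨hXE, hXc, hXp⟩ := hX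
  have hdisj : Disjoint X (-X) := disjoint_left.2 fun a ha hna => hXp a ha (mem_neg'.1 hna)
  have hcover : X ∪ -X = Eset d := by
    refine eq_of_subset_of_card_le (union_subset hXE fun a ha => ?_) ?_
    · simpa using neg_mem_Eset (hXE (mem_neg'.1 ha))
    · rw [card_union_of_disjoint hdisj, card_neg, hXc, card_Eset, two_mul]
  rw [← hcover, mem_union, mem_neg'] at hb
  exact hb

section

variable {d l : ℕ} {J : Set ℕ}

theorem exists_midpoint_flipAt (hl : l + 1 ≤ d) (h0 : l ∈ J) (h1 : l + 1 ∈ J) {X T : Finset ℤ}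
    (hX : RhatP d d X) (hTX : T ⊆ X) (hT : #T ≤ 1) :
    ∃ Z, RhatP d d Z ∧ #(X ∩ Z) ∈ J ∧ #(Z ∩ flipAt X T) ∈ J := by
  obtain ⟨S, hTS, hSX, hScard⟩ :=
    exists_subsuperset_card_eq hTX (n := d - l) (by omega) (by rw [hX.2.1]; omega)
  have hcard (U : Finset ℤ) (hUS : U ⊆ S) : #(flipAt X S ∩ flipAt X U) = l + #U := by
    rw [card_flipAt_inter_flipAt hX.2.2 hUS hSX, hX.2.1, hScard]
    omega
  refine ⟨flipAt X S, hX.flipAt hSX, ?_, ?_⟩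
  · have := hcard ∅ (empty_subset S)
    rw [flipAt_empty, inter_comm] at this
    simpa [this] using h0
  · rw [hcard T hTS]
    interval_cases #T
    exacts [h0, h1]

theorem exists_flipAt_card_sdiff_le {A B : Finset ℤ} (hA : RhatP d d A) (hB : RhatP d d B)
    {n : ℕ} (hAB : #(A \ B) ≤ n + 1) :
    ∃ T ⊆ A, #T ≤ 1 ∧ #(flipAt A T \ B) ≤ n := by
  obtain hempty | ⟨a, ha⟩ := (A \ B).eq_empty_or_nonempty
  · exact ⟨∅, empty_subset A, by simp, by simp [flipAt_empty, hempty]⟩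
  obtain ⟨haA, haB⟩ := mem_sdiff.1 ha
  have hnaB : -a ∈ B := (hB.mem_or_neg_mem (hA.1 haA)).resolve_left haB
  have hsub : flipAt A {a} \ B ⊆ (A \ B).erase a := by
    intro x hx
    simp only [flipAt, neg_singleton, mem_sdiff, mem_union, mem_singleton] at hx
    rcases hx with ⟨⟨hxA, hxa⟩ | rfl, hxB⟩
    exacts [mem_erase.2 ⟨hxa, mem_sdiff.2 ⟨hxA, hxB⟩⟩, absurd hnaB hxB]
  refine ⟨{a}, singleton_subset_iff.2 haA, by simp, ?_⟩
  have := card_le_card hsub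
  rw [card_erase_of_mem ha] at this
  omega

theorem hasWalk_of_card_sdiff_le (hl : l + 1 ≤ d) (h0 : l ∈ J) (h1 : l + 1 ∈ J) (n : ℕ) :
    ∀ A B : Finset ℤ, RhatP d d A → RhatP d d B → #(A \ B) ≤ n →
      HasWalk (RhatP d d) (fun A B => #(A ∩ B) ∈ J) (2 * n) A B := by
  induction n with
  | zero =>
    intro A B hA hB hAB
    have hAB' : A = B := eq_of_subset_of_card_le (sdiff_eq_empty_iff_subset.1
      (card_eq_zero.1 (Nat.le_zero.1 hAB))) (by rw [hA.2.1, hB.2.1])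
    exact hAB' ▸ .refl hA
  | succ n ih =>
    intro A B hA hB hAB
    obtain ⟨T, hTA, hT, hTB⟩ := exists_flipAt_card_sdiff_le hA hB hAB
    obtain ⟨Z, hZ, hAZ, hZA'⟩ := exists_midpoint_flipAt hl h0 h1 hA hTA hT
    rw [Nat.mul_succ]
    exact .cons hA hAZ (.cons hZ hZA' (ih _ B (hA.flipAt hTA) hB hTB))

end

theorem stmt_16_general (d : ℕ) (J : Set ℕ)
    (l : ℕ) (hl : l + 1 ≤ d) (h0 : l ∈ J) (h1 : l + 1 ∈ J) :
    GammaMixing d d (fun A B => (A ∩ B).card ∈ J) :=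
  ⟨2 * d, by omega, fun A B hA hB => hasWalk_of_card_sdiff_le hl h0 h1 d A B hA hB
    (hA.2.1 ▸ card_le_card sdiff_subset)⟩

/-- If `J ⊆ {0, …, d}` contains two consecutive integers `ℓ̃`, `ℓ̃ + 1` with
`ℓ̃ ≤ d − 1`, then the graph `Γ_d(J)` on `R̂_d` (arrow `A → B` iff `#(A ∩ B) ∈ J`) is mixing. -/
theorem stmt_16 (d : ℕ) (hd : 1 ≤ d) (J : Set ℕ) (hJ : ∀ j ∈ J, j ≤ d)
    (l : ℕ) (hl : l + 1 ≤ d) (h0 : l ∈ J) (h1 : l + 1 ∈ J) :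
    GammaMixing d d (fun A B => (A ∩ B).card ∈ J) :=
  stmt_16_general d J l hl h0 h1
end

section
/- Let V be a 6-dimensional real vector space spanned by vectors τ_i, σ_i, ζ_i (i ∈ ℤ/3ℤ) subject exactly to the relations τ₀+τ₁+τ₂ = 0, σ₀+σ₁+σ₂ = 0, ζ₀+ζ₁+ζ₂ = 0 (so that {τ₁, τ₂, σ₁, σ₂, ζ₁, ζ₂} is a basis). Define linear endomorphisms S and T of V by S(τ_i) = −τ_{i+1}, S(σ_i) = σ_i + ζ_{i−1}, S(ζ_i) = ζ_{i+1}, and T(τ_i) = −τ_{i−1}, T(σ_i) = σ_{i−1}, T(ζ_i) = ζ_i + σ_{i+1} (indices modulo 3). Then S and T are well-defined invertible linear maps, both preserve the direct sum decomposition V = span{τ_i} ⊕ span{σ_i, ζ_i}, both map the 24-element set R = {±σ_i, ±ζ_i, ±(σ_i + ζ_{i−1}), ±(σ_i − ζ_{i+1}) : i ∈ ℤ/3ℤ} bijectively onto itself, and the subgroup of GL(V) generated by S and T is finite. -/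
/-!
Because `τ_i, σ_i, ζ_i` satisfy only the three relations `Σ τ_i = Σ σ_i = Σ ζ_i = 0`, a linear
map out of `V` may be prescribed freely on them, provided the prescribed images satisfy the same
relations; this defines `S` and `T`, and explicit preimages of the generators show they are
surjective, hence invertible. Since `R = -R`, it suffices to check that `S` and `T` send
`σ_i, ζ_i, σ_i + ζ_{i-1}, σ_i - ζ_{i+1}` into `R`. In the coordinates `σ₁, σ₂, ζ₁, ζ₂` the set `R`
is an explicit set of 24 integer vectors. Finally every element of `⟨S, T⟩` permutes the finite
spanning set `R ∪ ±τ` and is determined by that permutation, so `⟨S, T⟩` is finite.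
-/

open Set Submodule Pointwise

section Sums

variable {M N : Type*} [AddCommGroup M] [AddCommGroup N]

lemma ZMod.add_one_add_one_eq_sub_one (i : ZMod 3) : i + 1 + 1 = i - 1 := by
  have h3 : (3 : ZMod 3) = 0 := rfl
  linear_combination h3

lemma sum_zmod_three (x : ZMod 3 → M) : ∑ i, x i = x 0 + x 1 + x 2 := Fin.sum_univ_three x

lemma sub_one_add_add_one_eq_zero {x : ZMod 3 → M} (hx : ∑ i, x i = 0) (i : ZMod 3) :
    x (i - 1) + x i + x (i + 1) = 0 := by
  rw [← Equiv.sum_comp (Equiv.addRight (i - 1)), sum_zmod_three] at hx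
  simpa only [Equiv.coe_addRight, zero_add, show (1 : ZMod 3) + (i - 1) = i by ring,
    show (2 : ZMod 3) + (i - 1) = i + 1 by ring] using hx

lemma apply_eq_of_sum_eq_zero {F : Type*} [FunLike F M N] [AddMonoidHomClass F M N] (f : F)
    {x : ZMod 3 → M} {y : ZMod 3 → N} (hx : ∑ i, x i = 0) (hy : ∑ i, y i = 0)
    (h1 : f (x 1) = y 1) (h2 : f (x 2) = y 2) (i : ZMod 3) : f (x i) = y i := by
  rw [sum_zmod_three, add_assoc, add_eq_zero_iff_eq_neg] at hx hy
  fin_cases i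
  · show f (x 0) = y 0
    rw [hx, hy, map_neg, map_add, h1, h2]
  · exact h1
  · exact h2

lemma sum_comp_add_const {G : Type*} [AddGroup G] [Fintype G] (x : G → M) (c : G) :
    ∑ i, x (i + c) = ∑ i, x i :=
  Equiv.sum_comp (Equiv.addRight c) x

lemma sum_comp_sub_const {G : Type*} [AddGroup G] [Fintype G] (x : G → M) (c : G) :
    ∑ i, x (i - c) = ∑ i, x i :=
  Equiv.sum_comp (Equiv.subRight c) x

end Sums

section RootSet

variable {M N : Type*} [AddCommGroup M] [AddCommGroup N]

def rootSet (s z : ZMod 3 → M) : Set M :=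
  {v | ∃ i : ZMod 3,
      v = s i ∨ v = -s i ∨ v = z i ∨ v = -z i ∨
      v = s i + z (i - 1) ∨ v = -(s i + z (i - 1)) ∨
      v = s i - z (i + 1) ∨ v = -(s i - z (i + 1))}

def rootVec (s z : ZMod 3 → M) (p : ZMod 3 × Fin 8) : M :=
  ![s p.1, -s p.1, z p.1, -z p.1, s p.1 + z (p.1 - 1), -(s p.1 + z (p.1 - 1)),
    s p.1 - z (p.1 + 1), -(s p.1 - z (p.1 + 1))] p.2

lemma rootSet_eq_range (s z : ZMod 3 → M) : rootSet s z = range (rootVec s z) := by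
  ext v
  simp [rootSet, rootVec, Fin.exists_fin_succ, Prod.exists, eq_comm]

lemma comp_rootVec {F : Type*} [FunLike F M N] [AddMonoidHomClass F M N] (f : F)
    (s z : ZMod 3 → M) : f ∘ rootVec s z = rootVec (f ∘ s) (f ∘ z) := by
  funext ⟨i, k⟩
  fin_cases k <;> simp [rootVec]

-- Coordinates of `σ_i` and `ζ_i` with respect to `σ₁, σ₂, ζ₁, ζ₂`.
def coordsσ : ZMod 3 → Fin 4 → ℤ := ![![-1, -1, 0, 0], ![1, 0, 0, 0], ![0, 1, 0, 0]]
def coordsζ : ZMod 3 → Fin 4 → ℤ := ![![0, 0, -1, -1], ![0, 0, 1, 0], ![0, 0, 0, 1]]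

lemma injective_rootVec_coords : Function.Injective (rootVec coordsσ coordsζ) := by decide

lemma sum_coordsσ : ∑ i, coordsσ i = 0 := by rw [sum_zmod_three]; decide

lemma sum_coordsζ : ∑ i, coordsζ i = 0 := by rw [sum_zmod_three]; decide

variable {s z : ZMod 3 → M}

lemma finite_rootSet : (rootSet s z).Finite := rootSet_eq_range s z ▸ finite_range _

lemma ncard_rootSet (hs : ∑ i, s i = 0) (hz : ∑ i, z i = 0)
    (hind : LinearIndependent ℤ ![s 1, s 2, z 1, z 2]) : (rootSet s z).ncard = 24 := by
  set φ := Fintype.linearCombination ℤ ![s 1, s 2, z 1, z 2]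
  have hφ (q : Fin 4 → ℤ) : φ q = q 0 • s 1 + q 1 • s 2 + q 2 • z 1 + q 3 • z 2 := by
    simp [φ, Fintype.linearCombination_apply, Fin.sum_univ_four]
  have hφs : φ ∘ coordsσ = s := funext <|
    apply_eq_of_sum_eq_zero φ sum_coordsσ hs (by simp [hφ, coordsσ]) (by simp [hφ, coordsσ])
  have hφz : φ ∘ coordsζ = z := funext <|
    apply_eq_of_sum_eq_zero φ sum_coordsζ hz (by simp [hφ, coordsζ]) (by simp [hφ, coordsζ])
  rw [rootSet_eq_range, ← hφs, ← hφz, ← comp_rootVec, ncard_range_of_injective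
    (hind.fintypeLinearCombination_injective.comp injective_rootVec_coords)]
  simp

lemma left_mem_rootSet (i : ZMod 3) : s i ∈ rootSet s z := ⟨i, by simp⟩

lemma right_mem_rootSet (i : ZMod 3) : z i ∈ rootSet s z := ⟨i, by simp⟩

lemma add_mem_rootSet (i : ZMod 3) : s i + z (i - 1) ∈ rootSet s z := ⟨i, by simp⟩

lemma sub_mem_rootSet (i : ZMod 3) : s i - z (i + 1) ∈ rootSet s z := ⟨i, by simp⟩

lemma neg_mem_rootSet {v : M} (hv : v ∈ rootSet s z) : -v ∈ rootSet s z := by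
  obtain ⟨i, h⟩ := hv
  exact ⟨i, by rcases h with rfl | rfl | rfl | rfl | rfl | rfl | rfl | rfl <;> simp⟩

lemma mapsTo_rootSet_of_forall_mem {F : Type*} [FunLike F M N] [AddMonoidHomClass F M N]
    {f : F} {s' z' : ZMod 3 → N} (hs : ∀ i, f (s i) ∈ rootSet s' z')
    (hz : ∀ i, f (z i) ∈ rootSet s' z')
    (hadd : ∀ i, f (s i + z (i - 1)) ∈ rootSet s' z')
    (hsub : ∀ i, f (s i - z (i + 1)) ∈ rootSet s' z') :
    MapsTo f (rootSet s z) (rootSet s' z') := by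
  rintro _ ⟨i, rfl | rfl | rfl | rfl | rfl | rfl | rfl | rfl⟩ <;>
    first | solve_by_elim | (rw [map_neg]; exact neg_mem_rootSet (by solve_by_elim))

end RootSet

lemma finite_closure_of_mapsTo {R M : Type*} [Semiring R] [AddCommMonoid M] [Module R M]
    {F : Set M} (hF : F.Finite) (hspan : span R F = ⊤) {s : Set (M ≃ₗ[R] M)}
    (hs : ∀ g ∈ s, MapsTo g F F) : (Subgroup.closure s : Set (M ≃ₗ[R] M)).Finite := by
  have hle : Subgroup.closure s ≤ MulAction.stabilizer (M ≃ₗ[R] M) F :=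
    (Subgroup.closure_le _).mpr fun g hg => by
      rw [SetLike.mem_coe, MulAction.mem_stabilizer_iff, ← Set.image_smul]
      exact ((hF.injOn_iff_bijOn_of_mapsTo (hs g hg)).mp g.injective.injOn).image_eq
  refine Set.Finite.subset ?_ hle
  have : Finite F := hF.to_subtype
  refine Set.finite_coe_iff.mp (Finite.of_injective
    (fun g : MulAction.stabilizer (M ≃ₗ[R] M) F => fun x : F =>
      (⟨g.1 x, (MulAction.mem_stabilizer_iff.mp g.2).subset (Set.smul_mem_smul_set x.2)⟩ : F)) ?_)
  intro g₁ g₂ h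
  exact Subtype.ext <| LinearEquiv.toLinearMap_injective <|
    LinearMap.ext_on hspan fun x hx => congrArg Subtype.val (congrFun h ⟨x, hx⟩)

lemma mapsTo_span {R M N : Type*} [Semiring R] [AddCommMonoid M] [Module R M] [AddCommMonoid N]
    [Module R N] (f : M →ₗ[R] N) {s : Set M} {t : Set N} (h : MapsTo f s (span R t)) :
    MapsTo f (span R s) (span R t) := fun _ hx =>
  (map_span_le f s (span R t)).mpr h (mem_map_of_mem hx)

lemma mapsTo_range_union_range_neg {ι M : Type*} [AddCommGroup M] {F : Type*} [FunLike F M M]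
    [AddMonoidHomClass F M M] {f : F} {x : ι → M} {π : ι → ι} (h : ∀ i, f (x i) = -x (π i)) :
    MapsTo f (range x ∪ range (-x)) (range x ∪ range (-x)) := by
  rintro _ (⟨i, rfl⟩ | ⟨i, rfl⟩)
  · exact Or.inr ⟨π i, (h i).symm⟩
  · exact Or.inl ⟨π i, by simp [h]⟩

lemma bijective_of_subset_range {K V : Type*} [DivisionRing K] [AddCommGroup V] [Module K V]
    [FiniteDimensional K V] {f : V →ₗ[K] V} {s : Set V} (hs : span K s = ⊤)
    (h : s ⊆ range f) : Function.Bijective f := by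
  have hsurj : Function.Surjective f :=
    LinearMap.range_eq_top.mp (top_unique (hs ▸ span_le.mpr h))
  exact ⟨LinearMap.injective_iff_surjective.mpr hsurj, hsurj⟩

section Ornithorynque

variable {K V : Type*} [AddCommGroup V] {τ σ ζ : ZMod 3 → V}

lemma span_range_union_eq_top [Semiring K] [Module K V]
    (hspan : span K {τ 1, τ 2, σ 1, σ 2, ζ 1, ζ 2} = ⊤) :
    span K (range τ ∪ (range σ ∪ range ζ)) = ⊤ :=
  top_unique <| hspan.symm.trans_le <| span_mono <| by
    rintro _ (rfl | rfl | rfl | rfl | rfl | rfl) <;> simp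

lemma exists_linearMap_apply_eq [CommRing K] [Module K V] (hτ : ∑ i, τ i = 0)
    (hσ : ∑ i, σ i = 0) (hζ : ∑ i, ζ i = 0)
    (hindep : LinearIndependent K ![τ 1, τ 2, σ 1, σ 2, ζ 1, ζ 2])
    (hspan : span K {τ 1, τ 2, σ 1, σ 2, ζ 1, ζ 2} = ⊤)
    {W : Type*} [AddCommGroup W] [Module K W] {τ' σ' ζ' : ZMod 3 → W}
    (hτ' : ∑ i, τ' i = 0) (hσ' : ∑ i, σ' i = 0) (hζ' : ∑ i, ζ' i = 0) :
    ∃ f : V →ₗ[K] W, ∀ i, f (τ i) = τ' i ∧ f (σ i) = σ' i ∧ f (ζ i) = ζ' i := by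
  have hrange : range ![τ 1, τ 2, σ 1, σ 2, ζ 1, ζ 2] = {τ 1, τ 2, σ 1, σ 2, ζ 1, ζ 2} := by
    simp only [Matrix.range_cons, Matrix.range_empty, union_empty, singleton_union]
  let B := Module.Basis.mk hindep (hrange ▸ hspan.ge)
  let f := B.constr K ![τ' 1, τ' 2, σ' 1, σ' 2, ζ' 1, ζ' 2]
  have hf (k : Fin 6) :
      f (![τ 1, τ 2, σ 1, σ 2, ζ 1, ζ 2] k) = ![τ' 1, τ' 2, σ' 1, σ' 2, ζ' 1, ζ' 2] k := by
    rw [← Module.Basis.mk_apply hindep (hrange ▸ hspan.ge) k]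
    exact B.constr_basis K _ k
  exact ⟨f, fun i => ⟨apply_eq_of_sum_eq_zero f hτ hτ' (hf 0) (hf 1) i,
    apply_eq_of_sum_eq_zero f hσ hσ' (hf 2) (hf 3) i,
    apply_eq_of_sum_eq_zero f hζ hζ' (hf 4) (hf 5) i⟩⟩

lemma span_range_inf_span_range_union_eq_bot [CommRing K] [Module K V] (hτ : ∑ i, τ i = 0)
    (hσ : ∑ i, σ i = 0) (hζ : ∑ i, ζ i = 0)
    (hindep : LinearIndependent K ![τ 1, τ 2, σ 1, σ 2, ζ 1, ζ 2])
    (hspan : span K {τ 1, τ 2, σ 1, σ 2, ζ 1, ζ 2} = ⊤) :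
    span K (range τ) ⊓ span K (range σ ∪ range ζ) = ⊥ := by
  obtain ⟨P, hP⟩ := exists_linearMap_apply_eq hτ hσ hζ hindep hspan hτ
    (σ' := 0) (ζ' := 0) (by simp) (by simp)
  have hid : EqOn P LinearMap.id (span K (range τ)) :=
    LinearMap.eqOn_span' (f := P) (g := LinearMap.id) (by rintro _ ⟨i, rfl⟩; exact (hP i).1)
  have hzero : EqOn P 0 (span K (range σ ∪ range ζ)) :=
    LinearMap.eqOn_span' (f := P) (g := 0) (by rintro _ (⟨i, rfl⟩ | ⟨i, rfl⟩) <;> simp [hP])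
  exact disjoint_iff.mp <| disjoint_def.mpr fun x hxτ hxσζ => (hid hxτ).symm.trans (hzero hxσζ)

variable (τ σ ζ) in
def IsSMap (f : V → V) : Prop :=
  ∀ i, f (τ i) = -τ (i + 1) ∧ f (σ i) = σ i + ζ (i - 1) ∧ f (ζ i) = ζ (i + 1)

variable (τ σ ζ) in
def IsTMap (f : V → V) : Prop :=
  ∀ i, f (τ i) = -τ (i - 1) ∧ f (σ i) = σ (i - 1) ∧ f (ζ i) = ζ i + σ (i + 1)

lemma exists_linearEquiv_isSMap [Field K] [Module K V] (hτ : ∑ i, τ i = 0) (hσ : ∑ i, σ i = 0)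
    (hζ : ∑ i, ζ i = 0) (hindep : LinearIndependent K ![τ 1, τ 2, σ 1, σ 2, ζ 1, ζ 2])
    (hspan : span K {τ 1, τ 2, σ 1, σ 2, ζ 1, ζ 2} = ⊤) :
    ∃ S : V ≃ₗ[K] V, IsSMap τ σ ζ (S : V →ₗ[K] V) := by
  obtain ⟨f, hf⟩ := exists_linearMap_apply_eq hτ hσ hζ hindep hspan
    (τ' := fun i => -τ (i + 1)) (σ' := fun i => σ i + ζ (i - 1)) (ζ' := fun i => ζ (i + 1))
    (by simp [Finset.sum_neg_distrib, sum_comp_add_const τ 1, hτ])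
    (by simp [Finset.sum_add_distrib, sum_comp_sub_const ζ 1, hσ, hζ])
    (by simp [sum_comp_add_const ζ 1, hζ])
  have : FiniteDimensional K V := Module.finite_def.mpr (fg_def.mpr ⟨_, toFinite _, hspan⟩)
  refine ⟨LinearEquiv.ofBijective f
    (bijective_of_subset_range (span_range_union_eq_top hspan) ?_), hf⟩
  rintro _ (⟨j, rfl⟩ | ⟨j, rfl⟩ | ⟨j, rfl⟩)
  · exact ⟨-τ (j - 1), by rw [map_neg, (hf _).1, sub_add_cancel, neg_neg]⟩
  · exact ⟨σ j - ζ (j + 1), by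
      rw [map_sub, (hf _).2.1, (hf _).2.2, ZMod.add_one_add_one_eq_sub_one, add_sub_cancel_right]⟩
  · exact ⟨ζ (j - 1), by rw [(hf _).2.2, sub_add_cancel]⟩

lemma exists_linearEquiv_isTMap [Field K] [Module K V] (hτ : ∑ i, τ i = 0) (hσ : ∑ i, σ i = 0)
    (hζ : ∑ i, ζ i = 0) (hindep : LinearIndependent K ![τ 1, τ 2, σ 1, σ 2, ζ 1, ζ 2])
    (hspan : span K {τ 1, τ 2, σ 1, σ 2, ζ 1, ζ 2} = ⊤) :
    ∃ T : V ≃ₗ[K] V, IsTMap τ σ ζ (T : V →ₗ[K] V) := by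
  obtain ⟨f, hf⟩ := exists_linearMap_apply_eq hτ hσ hζ hindep hspan
    (τ' := fun i => -τ (i - 1)) (σ' := fun i => σ (i - 1)) (ζ' := fun i => ζ i + σ (i + 1))
    (by simp [Finset.sum_neg_distrib, sum_comp_sub_const τ 1, hτ])
    (by simp [sum_comp_sub_const σ 1, hσ])
    (by simp [Finset.sum_add_distrib, sum_comp_add_const σ 1, hσ, hζ])
  have : FiniteDimensional K V := Module.finite_def.mpr (fg_def.mpr ⟨_, toFinite _, hspan⟩)
  refine ⟨LinearEquiv.ofBijective f
    (bijective_of_subset_range (span_range_union_eq_top hspan) ?_), hf⟩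
  rintro _ (⟨j, rfl⟩ | ⟨j, rfl⟩ | ⟨j, rfl⟩)
  · exact ⟨-τ (j + 1), by rw [map_neg, (hf _).1, add_sub_cancel_right, neg_neg]⟩
  · exact ⟨σ (j + 1), by rw [(hf _).2.1, add_sub_cancel_right]⟩
  · exact ⟨ζ j - σ (j + 1 + 1), by
      rw [map_sub, (hf _).2.1, (hf _).2.2, add_sub_cancel_right, add_sub_cancel_right]⟩

lemma linearIndependent_int_σ_ζ [Ring K] [CharZero K] [Module K V]
    (hindep : LinearIndependent K ![τ 1, τ 2, σ 1, σ 2, ζ 1, ζ 2]) :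
    LinearIndependent ℤ ![σ 1, σ 2, ζ 1, ζ 2] := by
  convert (hindep.comp ![2, 3, 4, 5] (by decide)).restrict_scalars' ℤ using 1
  funext k
  fin_cases k <;> rfl

lemma span_rootSet_union_range_eq_top [Semiring K] [Module K V]
    (hspan : span K {τ 1, τ 2, σ 1, σ 2, ζ 1, ζ 2} = ⊤) :
    span K (rootSet σ ζ ∪ (range τ ∪ range (-τ))) = ⊤ :=
  top_unique <| (span_range_union_eq_top hspan).symm.trans_le <| span_mono <| by
    rintro _ (⟨i, rfl⟩ | ⟨i, rfl⟩ | ⟨i, rfl⟩)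
    exacts [Or.inr (Or.inl ⟨i, rfl⟩), Or.inl (left_mem_rootSet i), Or.inl (right_mem_rootSet i)]

section Maps

variable [Ring K] [Module K V]

lemma IsSMap.mapsTo_rootSet {f : V →ₗ[K] V} (hf : IsSMap τ σ ζ f) (hζ : ∑ i, ζ i = 0) :
    MapsTo f (rootSet σ ζ) (rootSet σ ζ) := by
  refine mapsTo_rootSet_of_forall_mem (fun i => ?_) (fun i => ?_) (fun i => ?_) (fun i => ?_)
  · rw [(hf i).2.1]; exact add_mem_rootSet i
  · rw [(hf i).2.2]; exact right_mem_rootSet _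
  · rw [map_add, (hf i).2.1, (hf _).2.2, sub_add_cancel]
    convert sub_mem_rootSet i using 1
    linear_combination (norm := module) sub_one_add_add_one_eq_zero hζ i
  · rw [map_sub, (hf i).2.1, (hf _).2.2, ZMod.add_one_add_one_eq_sub_one, add_sub_cancel_right]
    exact left_mem_rootSet i

lemma IsTMap.mapsTo_rootSet {f : V →ₗ[K] V} (hf : IsTMap τ σ ζ f) (hσ : ∑ i, σ i = 0) :
    MapsTo f (rootSet σ ζ) (rootSet σ ζ) := by
  refine mapsTo_rootSet_of_forall_mem (fun i => ?_) (fun i => ?_) (fun i => ?_) (fun i => ?_)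
  · rw [(hf i).2.1]; exact left_mem_rootSet _
  · rw [(hf i).2.2, add_comm]
    simpa using add_mem_rootSet (s := σ) (z := ζ) (i + 1)
  · rw [map_add, (hf i).2.1, (hf _).2.2, sub_add_cancel]
    convert neg_mem_rootSet (sub_mem_rootSet (i + 1)) using 1
    rw [ZMod.add_one_add_one_eq_sub_one]
    linear_combination (norm := module) sub_one_add_add_one_eq_zero hσ i
  · rw [map_sub, (hf i).2.1, (hf _).2.2, ZMod.add_one_add_one_eq_sub_one]
    convert neg_mem_rootSet (right_mem_rootSet (i + 1)) using 1
    abel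

lemma IsSMap.mapsTo_span_range {f : V →ₗ[K] V} (hf : IsSMap τ σ ζ f) :
    MapsTo f (span K (range τ)) (span K (range τ)) ∧
      MapsTo f (span K (range σ ∪ range ζ)) (span K (range σ ∪ range ζ)) := by
  refine ⟨mapsTo_span f ?_, mapsTo_span f ?_⟩
  · rintro _ ⟨i, rfl⟩
    rw [(hf i).1]
    exact neg_mem (subset_span (mem_range_self _))
  · rintro _ (⟨i, rfl⟩ | ⟨i, rfl⟩)
    · rw [(hf i).2.1]
      exact add_mem (subset_span (Or.inl (mem_range_self _)))
        (subset_span (Or.inr (mem_range_self _)))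
    · rw [(hf i).2.2]
      exact subset_span (Or.inr (mem_range_self _))

lemma IsTMap.mapsTo_span_range {f : V →ₗ[K] V} (hf : IsTMap τ σ ζ f) :
    MapsTo f (span K (range τ)) (span K (range τ)) ∧
      MapsTo f (span K (range σ ∪ range ζ)) (span K (range σ ∪ range ζ)) := by
  refine ⟨mapsTo_span f ?_, mapsTo_span f ?_⟩
  · rintro _ ⟨i, rfl⟩
    rw [(hf i).1]
    exact neg_mem (subset_span (mem_range_self _))
  · rintro _ (⟨i, rfl⟩ | ⟨i, rfl⟩)
    · rw [(hf i).2.1]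
      exact subset_span (Or.inl (mem_range_self _))
    · rw [(hf i).2.2]
      exact add_mem (subset_span (Or.inr (mem_range_self _)))
        (subset_span (Or.inl (mem_range_self _)))

end Maps

end Ornithorynque

/-- On the 6-dimensional space spanned by `τ_i, σ_i, ζ_i` (`i ∈ ℤ/3ℤ`)
subject exactly to the relations `Στ_i = Σσ_i = Σζ_i = 0`, the formulas for `S` and `T` define
invertible linear maps which preserve the decomposition `span{τ} ⊕ span{σ, ζ}`, map the
24-element `D₄` root system `R` bijectively onto itself, and generate a finite subgroup of
`GL(V)`. -/
theorem stmt_18 (V : Type*) [AddCommGroup V] [Module ℝ V]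
    (τ σ ζ : ZMod 3 → V)
    (hτ : τ 0 + τ 1 + τ 2 = 0) (hσ : σ 0 + σ 1 + σ 2 = 0) (hζ : ζ 0 + ζ 1 + ζ 2 = 0)
    (hindep : LinearIndependent ℝ ![τ 1, τ 2, σ 1, σ 2, ζ 1, ζ 2])
    (hspan : Submodule.span ℝ {τ 1, τ 2, σ 1, σ 2, ζ 1, ζ 2} = ⊤)
    (R : Set V)
    (hR : R = {v : V | ∃ i : ZMod 3,
      v = σ i ∨ v = -σ i ∨ v = ζ i ∨ v = -ζ i ∨
      v = σ i + ζ (i - 1) ∨ v = -(σ i + ζ (i - 1)) ∨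
      v = σ i - ζ (i + 1) ∨ v = -(σ i - ζ (i + 1))}) :
    ∃ S T : V ≃ₗ[ℝ] V,
      (∀ i : ZMod 3, S (τ i) = -τ (i + 1) ∧ S (σ i) = σ i + ζ (i - 1) ∧ S (ζ i) = ζ (i + 1) ∧
        T (τ i) = -τ (i - 1) ∧ T (σ i) = σ (i - 1) ∧ T (ζ i) = ζ i + σ (i + 1)) ∧
      Submodule.span ℝ (Set.range τ) ⊓ Submodule.span ℝ (Set.range σ ∪ Set.range ζ) = ⊥ ∧
      Submodule.span ℝ (Set.range τ) ⊔ Submodule.span ℝ (Set.range σ ∪ Set.range ζ) = ⊤ ∧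
      (∀ x ∈ Submodule.span ℝ (Set.range τ),
        S x ∈ Submodule.span ℝ (Set.range τ) ∧ T x ∈ Submodule.span ℝ (Set.range τ)) ∧
      (∀ x ∈ Submodule.span ℝ (Set.range σ ∪ Set.range ζ),
        S x ∈ Submodule.span ℝ (Set.range σ ∪ Set.range ζ) ∧
          T x ∈ Submodule.span ℝ (Set.range σ ∪ Set.range ζ)) ∧
      R.ncard = 24 ∧
      Set.BijOn (fun x => S x) R R ∧ Set.BijOn (fun x => T x) R R ∧
      Set.Finite ((Subgroup.closure {S, T} : Subgroup (V ≃ₗ[ℝ] V)) : Set (V ≃ₗ[ℝ] V)) := by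
  replace hτ := (sum_zmod_three τ).trans hτ
  replace hσ := (sum_zmod_three σ).trans hσ
  replace hζ := (sum_zmod_three ζ).trans hζ
  change R = rootSet σ ζ at hR
  subst hR
  obtain ⟨S, hS⟩ := exists_linearEquiv_isSMap hτ hσ hζ hindep hspan
  obtain ⟨T, hT⟩ := exists_linearEquiv_isTMap hτ hσ hζ hindep hspan
  have hSR := hS.mapsTo_rootSet hζ
  have hTR := hT.mapsTo_rootSet hσ
  refine ⟨S, T, fun i => ⟨(hS i).1, (hS i).2.1, (hS i).2.2, (hT i).1, (hT i).2.1, (hT i).2.2⟩,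
    span_range_inf_span_range_union_eq_bot hτ hσ hζ hindep hspan,
    by rw [← span_union]; exact span_range_union_eq_top hspan,
    fun x hx => ⟨hS.mapsTo_span_range.1 hx, hT.mapsTo_span_range.1 hx⟩,
    fun x hx => ⟨hS.mapsTo_span_range.2 hx, hT.mapsTo_span_range.2 hx⟩,
    ncard_rootSet hσ hζ (linearIndependent_int_σ_ζ hindep),
    (finite_rootSet.injOn_iff_bijOn_of_mapsTo hSR).mp S.injective.injOn,
    (finite_rootSet.injOn_iff_bijOn_of_mapsTo hTR).mp T.injective.injOn,
    finite_closure_of_mapsTo (finite_rootSet.union ((finite_range _).union (finite_range _)))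
      (span_rootSet_union_range_eq_top hspan) ?_⟩
  rintro g (rfl | rfl)
  exacts [hSR.union_union (mapsTo_range_union_range_neg fun i => (hS i).1),
    hTR.union_union (mapsTo_range_union_range_neg fun i => (hT i).1)]
end

section
/- Let A be a 2×2 matrix with rational entries whose characteristic polynomial is irreducible over ℚ and has two distinct real roots λ and μ (necessarily irrational), with corresponding eigenlines L_λ and L_μ in ℝ². If B is an invertible 2×2 matrix with rational entries such that B maps L_λ onto L_μ, then B maps L_μ onto L_λ; in particular B² preserves each of the two eigenlines of A. -/
/-!
The eigenline `L_t` is spanned by `v(t) = (a₀₁, t - a₀₀)` (irreducibility forces `a₀₁ ≠ 0`),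
and `μ = tr A - λ`.
So "`B v(λ)` is parallel to `v(μ)`" is the vanishing at `λ` of a rational polynomial
`f(t) = det (B v(t), v(tr A - t))`. Since `λ` and `μ` are conjugate roots of the irreducible
characteristic polynomial, `f(μ) = 0` too, i.e. `B v(μ)` is parallel to `v(tr A - μ) = v(λ)`.
-/

open Polynomial Matrix

theorem IsConjRoot.aeval_eq_zero_of_aeval_eq_zero {K A : Type*} [Field K] [CommRing A]
    [Algebra K A] {x y : A} (h : IsConjRoot K x y) {f : K[X]} (hf : aeval x f = 0) :
    aeval y f = 0 :=
  aeval_eq_zero_of_dvd_aeval_eq_zero (h ▸ minpoly.dvd K x hf) (minpoly.aeval K y)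

theorem isConjRoot_of_aeval_eq_zero_of_irreducible {K A : Type*} [Field K] [Ring A]
    [Nontrivial A] [Algebra K A] {p : K[X]} (hp : Irreducible p) (hm : p.Monic) {x y : A}
    (hx : aeval x p = 0) (hy : aeval y p = 0) : IsConjRoot K x y :=
  (minpoly.eq_of_irreducible_of_monic hp hx hm).symm.trans
    (minpoly.eq_of_irreducible_of_monic hp hy hm)

theorem Submodule.span_singleton_eq_of_mem {K V : Type*} [Field K] [AddCommGroup V] [Module K V]
    {x y : V} (hxy : x ∈ K ∙ y) (hx : x ≠ 0) : K ∙ x = K ∙ y := by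
  obtain ⟨a, rfl⟩ := Submodule.mem_span_singleton.mp hxy
  exact span_singleton_smul_eq (isUnit_iff_ne_zero.mpr (left_ne_zero_of_smul hx)) y

theorem mem_span_singleton_iff_det_eq_zero {K : Type*} [Field K] {x y : Fin 2 → K}
    (hy : y 0 ≠ 0) : x ∈ K ∙ y ↔ (Matrix.of ![x, y]).det = 0 := by
  rw [Submodule.mem_span_singleton, det_fin_two]
  simp only [of_apply, cons_val_zero, cons_val_one]
  constructor
  · rintro ⟨a, rfl⟩
    simp only [Pi.smul_apply, smul_eq_mul]
    ring
  · intro h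
    refine ⟨x 0 / y 0, funext fun i => ?_⟩
    fin_cases i
    · simp [hy]
    · simp only [Pi.smul_apply, smul_eq_mul, Fin.mk_one]
      field_simp
      linear_combination h

namespace Matrix

variable {R : Type*} [CommRing R]

theorem isRoot_charpoly_fin_two_iff [Nontrivial R] (M : Matrix (Fin 2) (Fin 2) R) (t : R) :
    M.charpoly.IsRoot t ↔ (t - M 0 0) * (t - M 1 1) = M 0 1 * M 1 0 := by
  rw [charpoly_fin_two, IsRoot, trace_fin_two, det_fin_two]
  simp only [eval_add, eval_sub, eval_mul, eval_pow, eval_X, eval_C]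
  constructor <;> intro h <;> linear_combination h

theorem add_eq_trace_of_isRoot_charpoly [IsDomain R] {M : Matrix (Fin 2) (Fin 2) R} {s t : R}
    (hst : s ≠ t) (hs : M.charpoly.IsRoot s) (ht : M.charpoly.IsRoot t) : s + t = M.trace := by
  rw [isRoot_charpoly_fin_two_iff] at hs ht
  have : (s - t) * (s + t - M.trace) = 0 := by
    rw [trace_fin_two]; linear_combination hs - ht
  linear_combination (mul_eq_zero.mp this).resolve_left (sub_ne_zero.mpr hst)

theorem apply_zero_one_ne_zero_of_irreducible_charpoly {K : Type*} [Field K]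
    {A : Matrix (Fin 2) (Fin 2) K} (hA : Irreducible A.charpoly) : A 0 1 ≠ 0 := by
  intro h
  have hroot : A.charpoly.IsRoot (A 0 0) := (isRoot_charpoly_fin_two_iff _ _).2 (by simp [h])
  have := A.charpoly_degree_eq_dim
  rw [degree_eq_one_of_irreducible_of_root hA hroot] at this
  simp at this

/-- An eigenvector for `t` whenever `t` is a root of `M.charpoly` and `M 0 1 ≠ 0`. -/
def eigenvectorFinTwo (M : Matrix (Fin 2) (Fin 2) R) (t : R) : Fin 2 → R := ![M 0 1, t - M 0 0]

theorem eigenspace_toLin'_fin_two {K : Type*} [Field K] {M : Matrix (Fin 2) (Fin 2) K}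
    (h01 : M 0 1 ≠ 0) {t : K} (ht : M.charpoly.IsRoot t) :
    Module.End.eigenspace (toLin' M) t = K ∙ M.eigenvectorFinTwo t := by
  rw [isRoot_charpoly_fin_two_iff] at ht
  ext x
  rw [Module.End.mem_eigenspace_iff, toLin'_apply,
    mem_span_singleton_iff_det_eq_zero (y := M.eigenvectorFinTwo t) h01, det_fin_two]
  simp only [eigenvectorFinTwo, of_apply, cons_val_zero, cons_val_one, funext_iff,
    Fin.forall_fin_two, mulVec, dotProduct, Fin.sum_univ_two, Pi.smul_apply, smul_eq_mul]
  constructor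
  · rintro ⟨h0, -⟩
    linear_combination -h0
  · intro h
    refine ⟨by linear_combination -h, mul_left_cancel₀ h01 ?_⟩
    linear_combination (t - M 1 1) * h - x 0 * ht

variable {K L : Type*} [Field K] [Field L] [Algebra K L]

theorem exists_aeval_eq_det_mulVec_eigenvectorFinTwo (A B : Matrix (Fin 2) (Fin 2) K) :
    ∃ f : K[X], ∀ t : L, aeval t f = (of ![B.map (algebraMap K L) *ᵥ
      (A.map (algebraMap K L)).eigenvectorFinTwo t,
      (A.map (algebraMap K L)).eigenvectorFinTwo ((A.map (algebraMap K L)).trace - t)]).det := by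
  let w : Fin 2 → K[X] := B.map C *ᵥ ![C (A 0 1), X - C (A 0 0)]
  refine ⟨w 0 * (C A.trace - X - C (A 0 0)) - w 1 * C (A 0 1), fun t => ?_⟩
  simp [w, eigenvectorFinTwo, det_fin_two, trace_fin_two]

theorem map_eigenspace_eq_of_map_eigenspace_eq {A B : Matrix (Fin 2) (Fin 2) K}
    (hA : Irreducible A.charpoly) {lam mu : L} (hne : lam ≠ mu)
    (hlam : (A.map (algebraMap K L)).charpoly.IsRoot lam)
    (hmu : (A.map (algebraMap K L)).charpoly.IsRoot mu) (hB : IsUnit B)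
    (hmap : (Module.End.eigenspace (toLin' (A.map (algebraMap K L))) lam).map
        (toLin' (B.map (algebraMap K L))) =
      Module.End.eigenspace (toLin' (A.map (algebraMap K L))) mu) :
    (Module.End.eigenspace (toLin' (A.map (algebraMap K L))) mu).map
        (toLin' (B.map (algebraMap K L))) =
      Module.End.eigenspace (toLin' (A.map (algebraMap K L))) lam := by
  have hconj : IsConjRoot K lam mu := by
    rw [IsRoot.def, charpoly_map, eval_map_algebraMap] at hlam hmu
    exact isConjRoot_of_aeval_eq_zero_of_irreducible hA A.charpoly_monic hlam hmu
  set M := A.map (algebraMap K L)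
  set N := B.map (algebraMap K L)
  set v := M.eigenvectorFinTwo
  have h01 : M 0 1 ≠ 0 := by simpa [M] using apply_zero_one_ne_zero_of_irreducible_charpoly hA
  have htr : lam + mu = M.trace := add_eq_trace_of_isRoot_charpoly hne hlam hmu
  obtain ⟨f, hf⟩ := exists_aeval_eq_det_mulVec_eigenvectorFinTwo (L := L) A B
  rw [eigenspace_toLin'_fin_two h01 hlam, eigenspace_toLin'_fin_two h01 hmu, Submodule.map_span,
    Set.image_singleton] at hmap ⊢
  have hf_lam : aeval lam f = 0 := by
    rw [hf, show M.trace - lam = mu by linear_combination -htr,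
      ← mem_span_singleton_iff_det_eq_zero h01, ← hmap]
    exact Submodule.mem_span_singleton_self _
  have hmu_mem : N *ᵥ v mu ∈ L ∙ v lam := by
    rw [mem_span_singleton_iff_det_eq_zero h01,
      ← show M.trace - mu = lam by linear_combination -htr, ← hf]
    exact hconj.aeval_eq_zero_of_aeval_eq_zero hf_lam
  have hN : Function.Injective N.mulVec :=
    mulVec_injective_iff_isUnit.mpr (hB.map (algebraMap K L).mapMatrix)
  refine Submodule.span_singleton_eq_of_mem hmu_mem ?_
  rw [toLin'_apply, ← N.mulVec_zero, hN.ne_iff]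
  exact fun h => h01 (congrFun h 0)

end Matrix

/-- Let `A` be a rational `2×2` matrix whose characteristic polynomial is
irreducible over `ℚ` with two distinct real roots `λ`, `μ`, with eigenlines `L_λ`, `L_μ` in
`ℝ²`. If an invertible rational matrix `B` maps `L_λ` onto `L_μ`, then `B` maps `L_μ` onto
`L_λ`; in particular `B²` preserves each eigenline. -/
theorem stmt_19 (A B : Matrix (Fin 2) (Fin 2) ℚ)
    (hA : Irreducible (Matrix.charpoly A))
    (lam mu : ℝ) (hne : lam ≠ mu)
    (hlam : (Matrix.charpoly (A.map ((↑) : ℚ → ℝ))).IsRoot lam)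
    (hmu : (Matrix.charpoly (A.map ((↑) : ℚ → ℝ))).IsRoot mu)
    (hB : IsUnit B)
    (hmap : Submodule.map (Matrix.toLin' (B.map ((↑) : ℚ → ℝ)))
        (Module.End.eigenspace (Matrix.toLin' (A.map ((↑) : ℚ → ℝ))) lam) =
      Module.End.eigenspace (Matrix.toLin' (A.map ((↑) : ℚ → ℝ))) mu) :
    Submodule.map (Matrix.toLin' (B.map ((↑) : ℚ → ℝ)))
        (Module.End.eigenspace (Matrix.toLin' (A.map ((↑) : ℚ → ℝ))) mu) =
      Module.End.eigenspace (Matrix.toLin' (A.map ((↑) : ℚ → ℝ))) lam ∧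
    Submodule.map (Matrix.toLin' ((B * B).map ((↑) : ℚ → ℝ)))
        (Module.End.eigenspace (Matrix.toLin' (A.map ((↑) : ℚ → ℝ))) lam) =
      Module.End.eigenspace (Matrix.toLin' (A.map ((↑) : ℚ → ℝ))) lam ∧
    Submodule.map (Matrix.toLin' ((B * B).map ((↑) : ℚ → ℝ)))
        (Module.End.eigenspace (Matrix.toLin' (A.map ((↑) : ℚ → ℝ))) mu) =
      Module.End.eigenspace (Matrix.toLin' (A.map ((↑) : ℚ → ℝ))) mu := by
  have hswap := Matrix.map_eigenspace_eq_of_map_eigenspace_eq hA hne hlam hmu hB hmap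
  have hBB : (B * B).map ((↑) : ℚ → ℝ) = B.map ((↑) : ℚ → ℝ) * B.map ((↑) : ℚ → ℝ) :=
    Matrix.map_mul (f := algebraMap ℚ ℝ)
  simp only [hBB, Matrix.toLin'_mul, Submodule.map_comp]
  exact ⟨hswap, by rw [hmap]; exact hswap, (congrArg (Submodule.map _) hswap).trans hmap⟩
end
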